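/- Let A be a finite-dimensional (left) Leibniz algebra over a field. Then the following are equivalent: (1) A is nilpotent; (2) A satisfies the normalizer condition (every proper subalgebra of A is properly contained in its normalizer); (3) A satisfies the right normalizer condition (every proper subalgebra of A is properly contained in its right normalizer); (4) every maximal subalgebra of A is an ideal of A; (5) every maximal subalgebra of A is a right ideal of A. -/

import Mathlib

/-!
Left multiplications `br a` are derivations, so they span a Lie algebra of operators on `A`, and
Engel's theorem shows that `A` is nilpotent as soon as every `br a` is nilpotent.

If `A` is nilpotent and `H` is a proper subalgebra, pick `k` with `lcs br k ⊄ H` but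
`lcs br (k + 1) ≤ H`; since `lcs br k` is a two-sided ideal, every bracket with one of its elements
lies in `H`. An element of `lcs br k` outside `H` then normalizes `H`, and when `H` is maximal,
`H ⊔ lcs br k = ⊤`, which makes `H` an ideal.

If some `br a` is not nilpotent, its Fitting null component `U = ker (br a)^n` is a proper
subalgebra. Writing `a = a₀ + a₁` along the Fitting decomposition, `br a₁ = 0`, so `br a = br a₀`
with `a₀ ∈ U`. Hence `br a` maps the right normalizer of any subalgebra `M ⊇ U` into `M`, and the
Fitting decomposition of `br a` on that normalizer shows that it equals `M`. This contradicts
both the right normalizer condition (for `U`) and the condition that maximal subalgebras are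
right ideals (for a maximal `M ⊇ U`).
-/

/-- Span of all brackets `[u, v]` with `u ∈ p`, `v ∈ q`. -/
def bracketSpan {K A : Type*} [Field K] [AddCommGroup A] [Module K A]
    (br : A →ₗ[K] A →ₗ[K] A) (p q : Submodule K A) : Submodule K A :=
  Submodule.span K {x | ∃ a ∈ p, ∃ b ∈ q, br a b = x}

/-- Derived series: `derSeries br 0 = A` and
`derSeries br (n+1) = [derSeries br n, derSeries br n]`; so `derSeries br n = A^(n+1)`.
The algebra is solvable iff some term vanishes. -/
def derSeries {K A : Type*} [Field K] [AddCommGroup A] [Module K A]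
    (br : A →ₗ[K] A →ₗ[K] A) : ℕ → Submodule K A
  | 0 => ⊤
  | n + 1 => bracketSpan br (derSeries br n) (derSeries br n)

/-- Lower central series: `lcs br 0 = A` and `lcs br (n+1) = [A, lcs br n]`;
so `lcs br n = A^(n+1)`.  The algebra is nilpotent iff some term vanishes. -/
def lcs {K A : Type*} [Field K] [AddCommGroup A] [Module K A]
    (br : A →ₗ[K] A →ₗ[K] A) : ℕ → Submodule K A
  | 0 => ⊤
  | n + 1 => bracketSpan br ⊤ (lcs br n)

section Bracket

variable {K A : Type*} [Field K] [AddCommGroup A] [Module K A]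

def IsLeibniz (br : A →ₗ[K] A →ₗ[K] A) : Prop :=
  ∀ a b c : A, br a (br b c) = br (br a b) c + br b (br a c)

def IsSubalgebra (br : A →ₗ[K] A →ₗ[K] A) (H : Submodule K A) : Prop :=
  ∀ x ∈ H, ∀ y ∈ H, br x y ∈ H

def rightNormalizer (br : A →ₗ[K] A →ₗ[K] A) (H : Submodule K A) : Submodule K A :=
  ⨅ h : H, H.comap (br h)

variable {br : A →ₗ[K] A →ₗ[K] A}

theorem mem_rightNormalizer {H : Submodule K A} {x : A} :
    x ∈ rightNormalizer br H ↔ ∀ h ∈ H, br h x ∈ H := by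
  simp [rightNormalizer]

theorem IsSubalgebra.le_rightNormalizer {H : Submodule K A} (hH : IsSubalgebra br H) :
    H ≤ rightNormalizer br H :=
  fun x hx => mem_rightNormalizer.2 fun h hh => hH h hh x hx

theorem bracketSpan_le_iff {p q r : Submodule K A} :
    bracketSpan br p q ≤ r ↔ ∀ a ∈ p, ∀ b ∈ q, br a b ∈ r := by
  rw [bracketSpan, Submodule.span_le]
  exact ⟨fun h a ha b hb => h ⟨a, ha, b, hb, rfl⟩,
    by rintro h _ ⟨a, ha, b, hb, rfl⟩; exact h a ha b hb⟩

theorem bracket_mem_lcs_succ {n : ℕ} (a : A) {b : A} (hb : b ∈ lcs br n) :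
    br a b ∈ lcs br (n + 1) :=
  Submodule.subset_span ⟨a, trivial, b, hb, rfl⟩

theorem bracket_mem_lcs (hbr : IsLeibniz br) {i j : ℕ} {x y : A} (hx : x ∈ lcs br i)
    (hy : y ∈ lcs br j) : br x y ∈ lcs br (i + j + 1) := by
  induction i generalizing x y j with
  | zero => simpa using bracket_mem_lcs_succ x hy
  | succ i ih =>
    suffices lcs br (i + 1) ≤ (lcs br (i + 1 + j + 1)).comap (br.flip y) from this hx
    refine bracketSpan_le_iff.2 fun a _ u hu => ?_
    have hleft : br a (br u y) ∈ lcs br (i + 1 + j + 1) := by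
      simpa [Nat.add_right_comm] using bracket_mem_lcs_succ a (ih hu hy)
    have hright : br u (br a y) ∈ lcs br (i + 1 + j + 1) := by
      simpa [Nat.add_right_comm, Nat.add_assoc] using ih hu (bracket_mem_lcs_succ a hy)
    have hexpand : br (br a u) y = br a (br u y) - br u (br a y) := by
      rw [hbr a u y]; abel
    simpa [hexpand] using sub_mem hleft hright

theorem exists_not_lcs_le_and_lcs_succ_le {H : Submodule K A} (hH : H ≠ ⊤) {m : ℕ}
    (hm : lcs br m = ⊥) : ∃ k, ¬ lcs br k ≤ H ∧ lcs br (k + 1) ≤ H := by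
  classical
  have hex : ∃ n, lcs br n ≤ H := ⟨m, hm ▸ bot_le⟩
  have hpos : Nat.find hex ≠ 0 := fun h0 => hH (by simpa [h0, lcs] using Nat.find_spec hex)
  obtain ⟨k, hk⟩ := Nat.exists_eq_succ_of_ne_zero hpos
  exact ⟨k, Nat.find_min hex (by omega), by simpa [hk] using Nat.find_spec hex⟩

theorem exists_not_lcs_le_and_bracket_mem (hbr : IsLeibniz br) {H : Submodule K A}
    (hH : H ≠ ⊤) {m : ℕ} (hm : lcs br m = ⊥) :
    ∃ k, ¬ lcs br k ≤ H ∧ ∀ u ∈ lcs br k, ∀ a, br a u ∈ H ∧ br u a ∈ H := by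
  obtain ⟨k, hk, hk1⟩ := exists_not_lcs_le_and_lcs_succ_le hH hm
  exact ⟨k, hk, fun u hu a => ⟨hk1 (bracket_mem_lcs_succ a hu),
    hk1 (by simpa using bracket_mem_lcs hbr hu (j := 0) trivial)⟩⟩

end Bracket

section Subalgebra

variable {K A : Type*} [Field K] [AddCommGroup A] [Module K A] {br : A →ₗ[K] A →ₗ[K] A}
  {H I : Submodule K A}

theorem bracket_mem_of_mem_sup (hH : IsSubalgebra br H)
    (hI : ∀ u ∈ I, ∀ a, br a u ∈ H ∧ br u a ∈ H) {x y : A} (hx : x ∈ H ⊔ I) (hy : y ∈ H) :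
    br x y ∈ H ∧ br y x ∈ H := by
  obtain ⟨h, hh, u, hu, rfl⟩ := Submodule.mem_sup.1 hx
  simp only [map_add, LinearMap.add_apply]
  exact ⟨add_mem (hH h hh y hy) (hI u hu y).2, add_mem (hH y hy h hh) (hI u hu y).1⟩

theorem IsSubalgebra.sup_of_bracket_mem (hH : IsSubalgebra br H)
    (hI : ∀ u ∈ I, ∀ a, br a u ∈ H ∧ br u a ∈ H) : IsSubalgebra br (H ⊔ I) := by
  intro x hx y hy
  obtain ⟨h, hh, u, hu, rfl⟩ := Submodule.mem_sup.1 hy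
  rw [map_add]
  exact Submodule.mem_sup_left
    (add_mem (bracket_mem_of_mem_sup hH hI hx hh).1 (hI u hu x).1)

theorem exists_maximal_subalgebra_ge [FiniteDimensional K A] (hH : IsSubalgebra br H)
    (hne : H ≠ ⊤) :
    ∃ M : Submodule K A, IsSubalgebra br M ∧ H ≤ M ∧ M ≠ ⊤ ∧
      ∀ H' : Submodule K A, IsSubalgebra br H' → M ≤ H' → H' = M ∨ H' = ⊤ := by
  obtain ⟨M, hHM, ⟨hM, hMne⟩, hmax⟩ :=
    exists_maximal_ge_of_wellFoundedGT (fun M => IsSubalgebra br M ∧ M ≠ ⊤) H ⟨hH, hne⟩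
  refine ⟨M, hM, hHM, hMne, fun H' hH' hMH' => ?_⟩
  by_cases htop : H' = ⊤
  · exact .inr htop
  · exact .inl (le_antisymm (hmax ⟨hH', htop⟩ hMH') hMH')

end Subalgebra

section Fitting

variable {K V : Type*} [Field K] [AddCommGroup V] [Module K V]

theorem pow_add_apply_eq_zero_of_derivation (br : V →ₗ[K] V →ₗ[K] V) {D : Module.End K V}
    (hD : ∀ x y, D (br x y) = br (D x) y + br x (D y)) {p q : ℕ} {x y : V}
    (hx : (D ^ p) x = 0) (hy : (D ^ q) y = 0) : (D ^ (p + q)) (br x y) = 0 := by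
  induction p generalizing x q y with
  | zero => simp_all
  | succ p ihp =>
    induction q generalizing y with
    | zero => simp_all
    | succ q ihq =>
      have hx' : (D ^ p) (D x) = 0 := by rwa [pow_succ, Module.End.mul_apply] at hx
      have hy' : (D ^ q) (D y) = 0 := by rwa [pow_succ, Module.End.mul_apply] at hy
      rw [show p + 1 + (q + 1) = p + 1 + q + 1 by omega, pow_succ, Module.End.mul_apply, hD,
        map_add, ihq hy', add_zero, show p + 1 + q = p + (q + 1) by omega, ihp hx' hy]

theorem isSubalgebra_ker_pow_finrank_of_derivation [FiniteDimensional K V]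
    {br : V →ₗ[K] V →ₗ[K] V} {D : Module.End K V}
    (hD : ∀ x y, D (br x y) = br (D x) y + br x (D y)) :
    IsSubalgebra br (LinearMap.ker (D ^ Module.finrank K V)) := fun _ hx _ hy =>
  Module.End.ker_pow_le_ker_pow_finrank D _ (pow_add_apply_eq_zero_of_derivation br hD hx hy)

theorem le_of_forall_apply_mem_of_ker_pow_finrank_le [FiniteDimensional K V]
    {f : Module.End K V} {P U : Submodule K V} (hUP : U ≤ P) (hfP : ∀ x ∈ P, f x ∈ U)
    (hker : LinearMap.ker (f ^ Module.finrank K V) ≤ U) : P ≤ U := by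
  set g := f.restrict fun x hx => hUP (hfP x hx)
  obtain ⟨m, hm⟩ := (g.eventually_codisjoint_ker_pow_range_pow.and
    (Filter.eventually_ge_atTop 1)).exists
  intro x hx
  obtain ⟨y, hy, z, ⟨w, rfl⟩, hyz⟩ :=
    Submodule.mem_sup.1 (hm.1.eq_top ▸ Submodule.mem_top (x := (⟨x, hx⟩ : P)))
  obtain ⟨n, rfl⟩ := Nat.exists_eq_add_of_le' hm.2
  have hy' : (y : V) ∈ LinearMap.ker (f ^ (n + 1)) := by
    have := congr_arg Subtype.val (LinearMap.mem_ker.1 hy)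
    rwa [Module.End.pow_restrict, LinearMap.coe_restrict_apply] at this
  have hz : ((g ^ (n + 1)) w : V) ∈ U := by
    rw [pow_succ', Module.End.mul_apply]
    exact hfP _ ((g ^ n) w).2
  have hxyz : x = y + (g ^ (n + 1)) w := congr_arg Subtype.val hyz.symm
  rw [hxyz]
  exact add_mem (hker (Module.End.ker_pow_le_ker_pow_finrank f _ hy')) hz

end Fitting

section Leibniz

attribute [local instance] LieRing.ofAssociativeRing

variable {K A : Type*} [Field K] [AddCommGroup A] [Module K A] {br : A →ₗ[K] A →ₗ[K] A}

theorem lie_leftMul (hbr : IsLeibniz br) (a b : A) :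
    ⁅(br a : Module.End K A), br b⁆ = br (br a b) := by
  ext c
  simp only [Ring.lie_def, LinearMap.sub_apply, Module.End.mul_apply, hbr a b c]
  abel

def leftMulLieSubalgebra (hbr : IsLeibniz br) : LieSubalgebra K (Module.End K A) :=
  { LinearMap.range br with
    lie_mem' := by
      rintro _ _ ⟨a, rfl⟩ ⟨b, rfl⟩
      exact ⟨br a b, (lie_leftMul hbr a b).symm⟩ }

theorem lcs_le_lowerCentralSeries (hbr : IsLeibniz br) (n : ℕ) :
    lcs br n ≤ (LieModule.lowerCentralSeries K (leftMulLieSubalgebra hbr) A n).toSubmodule := by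
  induction n with
  | zero => simp [lcs]
  | succ n ih =>
    refine bracketSpan_le_iff.2 fun a _ b hb => ?_
    have hlie : br a b = ⁅(⟨br a, a, rfl⟩ : leftMulLieSubalgebra hbr), b⁆ := rfl
    rw [LieModule.lowerCentralSeries_succ, LieSubmodule.mem_toSubmodule, hlie]
    exact LieSubmodule.lie_mem_lie (LieSubmodule.mem_top _) (ih hb)

theorem exists_lcs_eq_bot_of_forall_isNilpotent [FiniteDimensional K A] (hbr : IsLeibniz br)
    (hnil : ∀ a : A, IsNilpotent (br a)) : ∃ m : ℕ, lcs br m = ⊥ := by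
  have hengel := LieAlgebra.isEngelian_of_isNoetherian (R := K) (L := leftMulLieSubalgebra hbr) A
    (by rintro ⟨-, a, rfl⟩; exact hnil a)
  obtain ⟨m, hm⟩ := (LieModule.isNilpotent_iff K _ A).1 hengel
  exact ⟨m, eq_bot_iff.2 ((lcs_le_lowerCentralSeries hbr m).trans (by simp [hm]))⟩

theorem exists_mem_ker_pow_finrank_leftMul_eq [FiniteDimensional K A] (hbr : IsLeibniz br)
    (a : A) : ∃ a₀ ∈ LinearMap.ker (br a ^ Module.finrank K A), br a₀ = br a := by
  set f : Module.End K A := br a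
  set F := LieAlgebra.ad K (Module.End K A) f
  have hFbr : ∀ k z, (F ^ k) (br z) = br ((f ^ k) z) := fun k z =>
    LinearMap.congr_fun (Module.End.commute_pow_left_of_commute
      (LinearMap.ext fun z => lie_leftMul hbr a z) k) z
  obtain ⟨m, ⟨hcodis, hdis⟩, hm⟩ := ((f.eventually_codisjoint_ker_pow_range_pow.and
    F.eventually_disjoint_ker_pow_range_pow).and (Filter.eventually_ge_atTop 1)).exists
  obtain ⟨a₀, ha₀, _, ⟨w, rfl⟩, ha⟩ :=
    Submodule.mem_sup.1 (hcodis.eq_top ▸ Submodule.mem_top (x := a))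
  refine ⟨a₀, Module.End.ker_pow_le_ker_pow_finrank f m ha₀, ?_⟩
  -- `ad f` intertwines `br` with `f` and kills `f`, so `br` of the Fitting one component of `a`
  -- lies in both the kernel and the range of `(ad f) ^ m`.
  suffices br ((f ^ m) w) = 0 by simpa [this] using congr_arg br ha
  have hFf : (F ^ m) f = 0 := by
    obtain ⟨n, rfl⟩ := Nat.exists_eq_add_of_le' hm
    rw [pow_succ, Module.End.mul_apply, LieAlgebra.ad_apply, lie_self, map_zero]
  have hker : br ((f ^ m) w) ∈ LinearMap.ker (F ^ m) := by
    rw [LinearMap.mem_ker, show (f ^ m) w = a - a₀ by rw [← ha]; abel, map_sub, map_sub, hFf,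
      hFbr, LinearMap.mem_ker.1 ha₀, map_zero, sub_zero]
  exact Submodule.disjoint_def.1 hdis _ hker ⟨br w, hFbr m w⟩

theorem rightNormalizer_le_of_ker_pow_finrank_le [FiniteDimensional K A] (hbr : IsLeibniz br)
    {a : A} {U : Submodule K A} (hU : IsSubalgebra br U)
    (hker : LinearMap.ker (br a ^ Module.finrank K A) ≤ U) : rightNormalizer br U ≤ U := by
  obtain ⟨a₀, ha₀, hbra₀⟩ := exists_mem_ker_pow_finrank_leftMul_eq hbr a
  refine le_of_forall_apply_mem_of_ker_pow_finrank_le hU.le_rightNormalizer (fun x hx => ?_) hker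
  rw [← hbra₀]
  exact mem_rightNormalizer.1 hx a₀ (hker ha₀)

theorem exists_ker_pow_finrank_ne_top_of_not_nilpotent [FiniteDimensional K A]
    (hbr : IsLeibniz br) (hnil : ¬ ∃ m : ℕ, lcs br m = ⊥) :
    ∃ a : A, LinearMap.ker (br a ^ Module.finrank K A) ≠ ⊤ := by
  by_contra! h
  exact hnil (exists_lcs_eq_bot_of_forall_isNilpotent hbr fun a =>
    ⟨_, LinearMap.ker_eq_top.1 (h a)⟩)

end Leibniz

/-- for a finite-dimensional (left) Leibniz algebra `A` the following
are equivalent: (1) `A` is nilpotent; (2) every proper subalgebra is properly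
contained in its normalizer; (3) every proper subalgebra is properly contained in
its right normalizer; (4) every maximal subalgebra is an ideal; (5) every maximal
subalgebra is a right ideal. -/
theorem leibniz_nilpotency_characterizations
    {K A : Type*} [Field K]
    [AddCommGroup A] [Module K A] [FiniteDimensional K A]
    (br : A →ₗ[K] A →ₗ[K] A)
    (leibniz : ∀ a b c : A, br a (br b c) = br (br a b) c + br b (br a c)) :
    List.TFAE
      [ (∃ m : ℕ, lcs br m = ⊥),
        (∀ H : Submodule K A, (∀ x ∈ H, ∀ y ∈ H, br x y ∈ H) → H ≠ ⊤ →
          ∃ x : A, x ∉ H ∧ ∀ h ∈ H, br x h ∈ H ∧ br h x ∈ H),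
        (∀ H : Submodule K A, (∀ x ∈ H, ∀ y ∈ H, br x y ∈ H) → H ≠ ⊤ →
          ∃ x : A, x ∉ H ∧ ∀ h ∈ H, br h x ∈ H),
        (∀ H : Submodule K A, (∀ x ∈ H, ∀ y ∈ H, br x y ∈ H) → H ≠ ⊤ →
          (∀ H' : Submodule K A, (∀ x ∈ H', ∀ y ∈ H', br x y ∈ H') →
            H ≤ H' → H' = H ∨ H' = ⊤) →
          ∀ a : A, ∀ x ∈ H, br a x ∈ H ∧ br x a ∈ H),
        (∀ H : Submodule K A, (∀ x ∈ H, ∀ y ∈ H, br x y ∈ H) → H ≠ ⊤ →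
          (∀ H' : Submodule K A, (∀ x ∈ H', ∀ y ∈ H', br x y ∈ H') →
            H ≤ H' → H' = H ∨ H' = ⊤) →
          ∀ x ∈ H, ∀ a : A, br x a ∈ H) ] := by
  have hfitting (a : A) : IsSubalgebra br (LinearMap.ker (br a ^ Module.finrank K A)) :=
    isSubalgebra_ker_pow_finrank_of_derivation (leibniz a)
  tfae_have 1 → 2 := by
    rintro ⟨m, hm⟩ H - hne
    obtain ⟨k, hk, hbracket⟩ := exists_not_lcs_le_and_bracket_mem leibniz hne hm
    obtain ⟨x, hx, hxH⟩ := SetLike.not_le_iff_exists.1 hk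
    exact ⟨x, hxH, fun h _ => (hbracket x hx h).symm⟩
  tfae_have 2 → 3 := fun h2 H hH hne =>
    (h2 H hH hne).imp fun _ hx => ⟨hx.1, fun h hh => (hx.2 h hh).2⟩
  tfae_have 3 → 1 := by
    intro h3
    by_contra hnil
    obtain ⟨a, hne⟩ := exists_ker_pow_finrank_ne_top_of_not_nilpotent leibniz hnil
    obtain ⟨x, hxU, hx⟩ := h3 _ (hfitting a) hne
    exact hxU (rightNormalizer_le_of_ker_pow_finrank_le leibniz (hfitting a) le_rfl
      (mem_rightNormalizer.2 hx))
  tfae_have 1 → 4 := by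
    rintro ⟨m, hm⟩ H hH hne hmax a x hx
    obtain ⟨k, hk, hbracket⟩ := exists_not_lcs_le_and_bracket_mem leibniz hne hm
    have htop : H ⊔ lcs br k = ⊤ :=
      (hmax _ (IsSubalgebra.sup_of_bracket_mem hH hbracket) le_sup_left).resolve_left
        fun h => hk (h ▸ le_sup_right)
    exact bracket_mem_of_mem_sup hH hbracket (htop ▸ Submodule.mem_top) hx
  tfae_have 4 → 5 := fun h4 H hH hne hmax x hx a => (h4 H hH hne hmax a x hx).2
  tfae_have 5 → 1 := by
    intro h5
    by_contra hnil
    obtain ⟨a, hne⟩ := exists_ker_pow_finrank_ne_top_of_not_nilpotent leibniz hnil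
    obtain ⟨M, hM, hUM, hMne, hmax⟩ := exists_maximal_subalgebra_ge (hfitting a) hne
    refine hMne (eq_top_iff.2 fun z _ => ?_)
    exact rightNormalizer_le_of_ker_pow_finrank_le leibniz hM hUM
      (mem_rightNormalizer.2 fun u hu => h5 M hM hMne hmax u hu z)
  tfae_finish
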